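/- If (p,q,r,s) is a bad quadruple with p, r ∈ P_K and q, s ∈ P_L, where K ≥ L, then m_p ≡ m_r (mod 2^{K² − L²}). -/

import Mathlib

/-- `m_p := ⌊2^{K_p²}·α·φ_p⌋`. -/
noncomputable def mfun (φ : ℕ → ℝ) (Kp : ℕ → ℕ) (α : ℝ) (p : ℕ) : ℕ :=
  ⌊(2 : ℝ) ^ ((Kp p) ^ 2) * α * φ p⌋₊

/-- `δ_{ip}`: the binary digit of `m_p` of weight `2^{K_p² − i}` (for `1 ≤ i ≤ K_p²`). -/
noncomputable def dig (φ : ℕ → ℝ) (Kp : ℕ → ℕ) (α : ℝ) (i p : ℕ) : ℕ :=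
  mfun φ Kp α p / 2 ^ ((Kp p) ^ 2 - i) % 2

/-- `Δ_{ip} := Σ_{j=(i−1)²+1}^{i²} δ_{jp}·2^{i²−j}` for `1 ≤ i ≤ K_p`, and `0` for `i > K_p`. -/
noncomputable def Blk (φ : ℕ → ℝ) (Kp : ℕ → ℕ) (α : ℝ) (i p : ℕ) : ℕ :=
  if i ≤ Kp p then ∑ j ∈ Finset.Icc ((i - 1) ^ 2 + 1) (i ^ 2), dig φ Kp α j p * 2 ^ (i ^ 2 - j)
  else 0

/-- `t_p := 2^{K_p² + 3K_p + 2}`. -/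
def tfun (Kp : ℕ → ℕ) (p : ℕ) : ℕ := 2 ^ ((Kp p) ^ 2 + 3 * Kp p + 2)

/-- `a_p := Σ_{i=1}^{K_p} Δ_{ip}·2^{(i−1)²+3i} + t_p`. -/
noncomputable def afun (φ : ℕ → ℝ) (Kp : ℕ → ℕ) (α : ℝ) (p : ℕ) : ℕ :=
  (∑ i ∈ Finset.Icc 1 (Kp p), Blk φ Kp α i p * 2 ^ ((i - 1) ^ 2 + 3 * i)) + tfun Kp p

/-- A quadruple `(p,q,r,s)` is bad (w.r.t. `α`) if `a_p + a_q = a_r + a_s` and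
`a_p > a_r ≥ a_s > a_q`. -/
noncomputable def IsBad (φ : ℕ → ℝ) (Kp : ℕ → ℕ) (α : ℝ) (p q r s : ℕ) : Prop :=
  afun φ Kp α p + afun φ Kp α q = afun φ Kp α r + afun φ Kp α s ∧
  afun φ Kp α r < afun φ Kp α p ∧ afun φ Kp α s ≤ afun φ Kp α r ∧ afun φ Kp α q < afun φ Kp α s

/-- The hypothesis defining `φ_p = (1/π)·arctan(v_p/u_p)` for primes `p ≡ 1 (mod 4)`,
where `p = u_p² + v_p²` with `u_p > v_p > 0`. -/
def PhiHyp (u v : ℕ → ℕ) (φ : ℕ → ℝ) : Prop :=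
  ∀ p : ℕ, p.Prime → p % 4 = 1 →
    0 < v p ∧ v p < u p ∧ p = (u p) ^ 2 + (v p) ^ 2 ∧
    φ p = (1 / Real.pi) * Real.arctan ((v p : ℝ) / (u p : ℝ))

/-- The hypothesis defining `K_p`: the unique integer `K > 2` with
`2^{(K−2)²} < p^β < 2^{(K−1)²}`, for primes `p ≡ 1 (mod 4)`. -/
def KpHyp (β : ℝ) (Kp : ℕ → ℕ) : Prop :=
  ∀ p : ℕ, p.Prime → p % 4 = 1 →
    2 < Kp p ∧ (2 : ℝ) ^ ((Kp p - 2) ^ 2) < (p : ℝ) ^ β ∧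
      (p : ℝ) ^ β < (2 : ℝ) ^ ((Kp p - 1) ^ 2)


/-!
The number `a_p - t_p` is written in the mixed radix with weights `2^{(i-1)²+3i}`, with the
block `Δ_{ip}` as its `i`-th digit. Since `Δ_{ip} < 2^{2i}`, even the digit sums `Δ_{ip} + Δ_{iq}`
stay below the radix, so `a_p + a_q = a_r + a_s` (with `t_p = t_r`, `t_q = t_s`) forces
`Δ_{ip} + Δ_{iq} = Δ_{ir} + Δ_{is}` for every `i`. For `L < i ≤ K` the blocks of `q` and `s`
vanish, so `p` and `r` share the blocks `Δ_{L+1}, …, Δ_K`, which are exactly the binary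
digits of `m_p mod 2^{K²−L²}`.
-/

lemma Nat.sum_range_div_two_pow_mod_two_mul (x k : ℕ) :
    ∑ t ∈ Finset.range k, x / 2 ^ t % 2 * 2 ^ t = x % 2 ^ k := by
  induction k with
  | zero => simp [Nat.mod_one]
  | succ k ih =>
    rw [Finset.sum_range_succ, ih, pow_succ, Nat.mod_mul]
    ring

lemma Nat.sum_Icc_div_two_pow_mod_two_mul {a b c : ℕ} (n : ℕ) (hab : a ≤ b) (hbc : b ≤ c) :
    ∑ j ∈ Finset.Icc (a + 1) b, n / 2 ^ (c - j) % 2 * 2 ^ (b - j)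
      = n / 2 ^ (c - b) % 2 ^ (b - a) := by
  rw [← Nat.sum_range_div_two_pow_mod_two_mul (n / 2 ^ (c - b)) (b - a)]
  refine Finset.sum_bij' (fun j _ => b - j) (fun t _ => b - t) ?_ ?_ ?_ ?_ ?_ <;>
    intro j hj <;> simp only [Finset.mem_Icc, Finset.mem_range] at hj ⊢
  · omega
  · omega
  · omega
  · omega
  · rw [Nat.div_div_eq_div_mul, ← pow_add, show c - b + (b - j) = c - j by omega]

lemma sum_range_mul_lt {w c : ℕ → ℕ} (hw : 0 < w 0) (hc : ∀ i, (c i + 1) * w i ≤ w (i + 1))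
    (n : ℕ) : ∑ i ∈ Finset.range n, c i * w i < w n := by
  induction n with
  | zero => simpa using hw
  | succ n ih =>
    rw [Finset.sum_range_succ]
    calc _ < w n + c n * w n := by omega
      _ = (c n + 1) * w n := by ring
      _ ≤ w (n + 1) := hc n

lemma eq_of_sum_range_mul_eq {w c c' : ℕ → ℕ} (hw : 0 < w 0)
    (hc : ∀ i, (c i + 1) * w i ≤ w (i + 1)) (hc' : ∀ i, (c' i + 1) * w i ≤ w (i + 1)) {n : ℕ}
    (h : ∑ i ∈ Finset.range n, c i * w i = ∑ i ∈ Finset.range n, c' i * w i) :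
    ∀ i < n, c i = c' i := by
  induction n with
  | zero => simp
  | succ n ih =>
    rw [Finset.sum_range_succ, Finset.sum_range_succ] at h
    have hlow := sum_range_mul_lt hw hc n
    have hlow' := sum_range_mul_lt hw hc' n
    have hwn : 0 < w n := lt_of_le_of_lt (Nat.zero_le _) hlow
    have htop : c n = c' n := by
      have := congrArg (· / w n) h
      simpa only [Nat.add_mul_div_right _ _ hwn, Nat.div_eq_of_lt hlow,
        Nat.div_eq_of_lt hlow', zero_add] using this
    rw [htop] at h
    have hrest := ih (Nat.add_right_cancel h)
    intro i hi
    rcases Nat.lt_succ_iff_lt_or_eq.mp hi with hi | rfl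
    exacts [hrest i hi, htop]

lemma Nat.ModEq.mul_of_div_mod_eq {m n c d : ℕ} (h : m ≡ n [MOD c])
    (h' : m / c % d = n / c % d) : m ≡ n [MOD c * d] := by
  unfold Nat.ModEq at *
  rw [Nat.mod_mul, Nat.mod_mul, h, h']

lemma modEq_two_pow_sq_sub_sq_of_blocks {m n K L : ℕ} (hLK : L ≤ K)
    (h : ∀ i, L ≤ i → i < K →
      m / 2 ^ (K ^ 2 - (i + 1) ^ 2) % 2 ^ ((i + 1) ^ 2 - i ^ 2)
        = n / 2 ^ (K ^ 2 - (i + 1) ^ 2) % 2 ^ ((i + 1) ^ 2 - i ^ 2)) :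
    m ≡ n [MOD 2 ^ (K ^ 2 - L ^ 2)] := by
  induction hLK using Nat.decreasingInduction with
  | self => simpa using Nat.modEq_one
  | of_succ i hiK ih =>
    have hsq : i ^ 2 ≤ (i + 1) ^ 2 := Nat.pow_le_pow_left (Nat.le_succ i) 2
    have hsqK : (i + 1) ^ 2 ≤ K ^ 2 := Nat.pow_le_pow_left hiK 2
    rw [show K ^ 2 - i ^ 2 = (K ^ 2 - (i + 1) ^ 2) + ((i + 1) ^ 2 - i ^ 2) by omega, pow_add]
    exact (ih fun j hj hjK => h j (by omega) hjK).mul_of_div_mod_eq (h i le_rfl hiK)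

section Blocks

variable (φ : ℕ → ℝ) (Kp : ℕ → ℕ) (α : ℝ)

lemma Blk_zero (x : ℕ) : Blk φ Kp α 0 x = 0 := by
  simp [Blk]

lemma Blk_of_lt {i x : ℕ} (h : Kp x < i) : Blk φ Kp α i x = 0 := by
  rw [Blk, if_neg (by omega)]

lemma Blk_eq_div_mod {i x : ℕ} (h1 : 1 ≤ i) (h2 : i ≤ Kp x) :
    Blk φ Kp α i x = mfun φ Kp α x / 2 ^ (Kp x ^ 2 - i ^ 2) % 2 ^ (i ^ 2 - (i - 1) ^ 2) := by
  rw [Blk, if_pos h2]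
  exact Nat.sum_Icc_div_two_pow_mod_two_mul _ (Nat.pow_le_pow_left (by omega) 2)
    (Nat.pow_le_pow_left h2 2)

lemma Blk_lt (i x : ℕ) : Blk φ Kp α i x < 2 ^ (2 * i) := by
  rcases Nat.eq_zero_or_pos i with rfl | hi
  · simp [Blk_zero]
  by_cases h2 : i ≤ Kp x
  · rw [Blk_eq_div_mod φ Kp α hi h2]
    refine (Nat.mod_lt _ (by positivity)).trans_le (Nat.pow_le_pow_right (by norm_num) ?_)
    obtain ⟨j, rfl⟩ : ∃ j, i = j + 1 := ⟨i - 1, by omega⟩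
    simp only [Nat.add_sub_cancel]
    have : (j + 1) ^ 2 = j ^ 2 + 2 * j + 1 := by ring
    omega
  · rw [Blk_of_lt φ Kp α (not_le.mp h2)]
    positivity

-- The right side is the weight `2 ^ ((i - 1) ^ 2 + 3 * i)` at `i + 1`, kept unsimplified to match it.
lemma Blk_add_Blk_add_one_mul_le (x y i : ℕ) :
    (Blk φ Kp α i x + Blk φ Kp α i y + 1) * 2 ^ ((i - 1) ^ 2 + 3 * i)
      ≤ 2 ^ ((i + 1 - 1) ^ 2 + 3 * (i + 1)) := by
  have hdigits : Blk φ Kp α i x + Blk φ Kp α i y + 1 ≤ 2 ^ (2 * i + 1) := by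
    have := Blk_lt φ Kp α i x
    have := Blk_lt φ Kp α i y
    rw [pow_succ]
    omega
  have hexp : 2 * i + 1 + ((i - 1) ^ 2 + 3 * i) ≤ (i + 1 - 1) ^ 2 + 3 * (i + 1) := by
    rcases i with _ | j
    · norm_num
    · simp only [Nat.add_sub_cancel]
      nlinarith
  calc _ ≤ 2 ^ (2 * i + 1) * 2 ^ ((i - 1) ^ 2 + 3 * i) := Nat.mul_le_mul_right _ hdigits
    _ = 2 ^ (2 * i + 1 + ((i - 1) ^ 2 + 3 * i)) := (pow_add _ _ _).symm
    _ ≤ _ := Nat.pow_le_pow_right (by norm_num) hexp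

lemma afun_eq_sum_range {x K : ℕ} (hx : Kp x ≤ K) :
    afun φ Kp α x = ∑ i ∈ Finset.range (K + 1), Blk φ Kp α i x * 2 ^ ((i - 1) ^ 2 + 3 * i)
      + tfun Kp x := by
  rw [afun]
  congr 1
  refine Finset.sum_subset (fun i hi => ?_) fun i _ hi => ?_
  · simp only [Finset.mem_Icc, Finset.mem_range] at hi ⊢
    omega
  · simp only [Finset.mem_Icc, not_and_or, not_le] at hi
    rcases hi with hi | hi
    · rw [Nat.lt_one_iff.mp hi, Blk_zero, zero_mul]
    · rw [Blk_of_lt φ Kp α hi, zero_mul]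

lemma Blk_add_Blk_eq_of_afun_add_eq {p q r s K : ℕ} (hpr : Kp p = Kp r) (hqs : Kp q = Kp s)
    (hp : Kp p ≤ K) (hq : Kp q ≤ K)
    (hsum : afun φ Kp α p + afun φ Kp α q = afun φ Kp α r + afun φ Kp α s) :
    ∀ i < K + 1, Blk φ Kp α i p + Blk φ Kp α i q = Blk φ Kp α i r + Blk φ Kp α i s := by
  have htpr : tfun Kp p = tfun Kp r := by simp only [tfun, hpr]
  have htqs : tfun Kp q = tfun Kp s := by simp only [tfun, hqs]
  rw [afun_eq_sum_range φ Kp α hp, afun_eq_sum_range φ Kp α hq,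
    afun_eq_sum_range φ Kp α (hpr ▸ hp), afun_eq_sum_range φ Kp α (hqs ▸ hq)] at hsum
  refine eq_of_sum_range_mul_eq (by positivity) (Blk_add_Blk_add_one_mul_le φ Kp α p q)
    (Blk_add_Blk_add_one_mul_le φ Kp α r s) ?_
  simp only [add_mul, Finset.sum_add_distrib]
  omega

end Blocks

theorem stmt11_general (α : ℝ)
    (Kp : ℕ → ℕ) (φ : ℕ → ℝ)
    (p q r s K L : ℕ)
    (hpK : Kp p = K)
    (hqL : Kp q = L)
    (hrK : Kp r = K)
    (hsL : Kp s = L)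
    (hKL : L ≤ K)
    (hbad : IsBad φ Kp α p q r s) :
    mfun φ Kp α p ≡ mfun φ Kp α r [MOD 2 ^ (K ^ 2 - L ^ 2)] := by
  have hdigits := Blk_add_Blk_eq_of_afun_add_eq φ Kp α (hpK.trans hrK.symm)
    (hqL.trans hsL.symm) hpK.le (hqL ▸ hKL) hbad.1
  refine modEq_two_pow_sq_sub_sq_of_blocks hKL fun i hLi hiK => ?_
  have hblock := hdigits (i + 1) (by omega)
  rw [Blk_of_lt φ Kp α (by omega : Kp q < i + 1), Blk_of_lt φ Kp α (by omega : Kp s < i + 1),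
    Blk_eq_div_mod φ Kp α (by omega) (by omega : i + 1 ≤ Kp p),
    Blk_eq_div_mod φ Kp α (by omega) (by omega : i + 1 ≤ Kp r), hpK, hrK] at hblock
  simpa using hblock

theorem stmt11 (β α : ℝ) (hβ : 2 < β) (hα : α ∈ Set.Ico (1 : ℝ) 2)
    (u v Kp : ℕ → ℕ) (φ : ℕ → ℝ) (hφ : PhiHyp u v φ) (hKp : KpHyp β Kp)
    (p q r s K L : ℕ)
    (hp : p.Prime) (hp4 : p % 4 = 1) (hpK : Kp p = K)
    (hq : q.Prime) (hq4 : q % 4 = 1) (hqL : Kp q = L)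
    (hr : r.Prime) (hr4 : r % 4 = 1) (hrK : Kp r = K)
    (hs : s.Prime) (hs4 : s % 4 = 1) (hsL : Kp s = L)
    (hKL : L ≤ K)
    (hbad : IsBad φ Kp α p q r s) :
    mfun φ Kp α p ≡ mfun φ Kp α r [MOD 2 ^ (K ^ 2 - L ^ 2)] :=
  stmt11_general α Kp φ p q r s K L hpK hqL hrK hsL hKL hbad
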